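/- Define L(y) = 5 cos y + 8 cos 2y - 2 cos 3y - 8 on [0, π]. Then L'(y) = sin y (24 cos² y - 32 cos y - 11), L(0) = 3, L(π) = -3, and there exists a unique y_0 ∈ (0, π) with L(y_0) = 0; moreover L(y) > 0 for y ∈ (0, y_0) and L(y) < 0 for y ∈ (y_0, π). -/
import Mathlib


open Real Set

/-- `L(y) = 5 cos y + 8 cos 2y - 2 cos 3y - 8`, the numerator of the simplified
first Lyapunov coefficient. -/
noncomputable def lorenz96L (y : ℝ) : ℝ :=
  5 * Real.cos y + 8 * Real.cos (2 * y) - 2 * Real.cos (3 * y) - 8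

/-- `L'(y) = sin y (24 cos² y - 32 cos y - 11)`, `L(0) = 3`, `L(π) = -3`, and there
is a unique `y₀ ∈ (0, π)` with `L(y₀) = 0`; moreover `L > 0` on `(0, y₀)` and
`L < 0` on `(y₀, π)`. -/
theorem lorenz96_L_sign :
    (∀ y : ℝ, HasDerivAt lorenz96L
      (Real.sin y * (24 * Real.cos y ^ 2 - 32 * Real.cos y - 11)) y) ∧
    lorenz96L 0 = 3 ∧ lorenz96L Real.pi = -3 ∧
    ∃ y₀ ∈ Ioo (0 : ℝ) Real.pi, lorenz96L y₀ = 0 ∧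
      (∀ y ∈ Ioo (0 : ℝ) Real.pi, lorenz96L y = 0 → y = y₀) ∧
      (∀ y ∈ Ioo (0 : ℝ) y₀, 0 < lorenz96L y) ∧
      (∀ y ∈ Ioo y₀ Real.pi, lorenz96L y < 0) := by
  -- the derivative
  have hderiv : ∀ y : ℝ, HasDerivAt lorenz96L
      (Real.sin y * (24 * Real.cos y ^ 2 - 32 * Real.cos y - 11)) y := by
    intro y
    have h1 : HasDerivAt Real.cos (-Real.sin y) y := Real.hasDerivAt_cos y
    have h2 : HasDerivAt (fun y : ℝ => Real.cos (2 * y)) (-Real.sin (2 * y) * 2) y := by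
      have := ((hasDerivAt_id y).const_mul (2 : ℝ)).cos
      simpa using this
    have h3 : HasDerivAt (fun y : ℝ => Real.cos (3 * y)) (-Real.sin (3 * y) * 3) y := by
      have := ((hasDerivAt_id y).const_mul (3 : ℝ)).cos
      simpa using this
    have h : HasDerivAt lorenz96L
        (5 * (-Real.sin y) + 8 * (-Real.sin (2 * y) * 2) - 2 * (-Real.sin (3 * y) * 3)) y := by
      unfold lorenz96L
      exact (((h1.const_mul 5).add (h2.const_mul 8)).sub (h3.const_mul 2)).sub_const 8
    convert h using 1
    rw [Real.sin_two_mul, Real.sin_three_mul]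
    have := Real.sin_sq_add_cos_sq y
    nlinarith [this, Real.sin_le_one y]
  have hcont : Continuous lorenz96L :=
    continuous_iff_continuousAt.mpr fun y => (hderiv y).continuousAt
  -- values at endpoints
  have hL0 : lorenz96L 0 = 3 := by norm_num [lorenz96L]
  have hLpi : lorenz96L Real.pi = -3 := by
    have h2pi : Real.cos (2 * Real.pi) = 1 := Real.cos_two_pi
    have h3pi : Real.cos (3 * Real.pi) = -1 := by
      rw [show (3 : ℝ) * Real.pi = 2 * Real.pi + Real.pi by ring, Real.cos_add,
        Real.cos_two_pi, Real.sin_two_pi]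
      simp
    norm_num [lorenz96L, h2pi, h3pi, Real.cos_pi]
  -- the critical point
  set s : ℝ := Real.sqrt (65 / 72) with hs_def
  have hs_sq : s ^ 2 = 65 / 72 := Real.sq_sqrt (by norm_num)
  have hs_nonneg : 0 ≤ s := Real.sqrt_nonneg _
  have hs_lb : 9 / 10 < s := by nlinarith
  have hs_ub : s < 1 := by nlinarith
  set x : ℝ := 2 / 3 - s with hx_def
  have hx1 : -1 < x := by simp only [hx_def]; linarith
  have hx2 : x < 1 := by simp only [hx_def]; linarith
  have hx3 : x < 1 / 3 := by simp only [hx_def]; linarith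
  have hq0 : 24 * x ^ 2 - 32 * x - 11 = 0 := by
    simp only [hx_def]; nlinarith
  clear_value x
  clear hx_def hs_sq hs_lb hs_ub hs_nonneg
  set m : ℝ := Real.arccos x with hm_def
  have hm0 : 0 < m := Real.arccos_pos.mpr hx2
  have hmpi : m < Real.pi :=
    lt_of_le_of_ne (Real.arccos_le_pi x) fun h => by
      have := Real.arccos_eq_pi.mp h; linarith
  have hcm : Real.cos m = x := Real.cos_arccos hx1.le hx2.le
  -- sign of the quadratic
  have hq_neg : ∀ c : ℝ, x < c → c ≤ 1 → 24 * c ^ 2 - 32 * c - 11 < 0 := by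
    intro c h1 h2
    nlinarith [mul_pos (sub_pos.mpr h1) (show (0:ℝ) < 32 - 24 * (c + x) by linarith)]
  have hq_pos : ∀ c : ℝ, -1 ≤ c → c < x → 0 < 24 * c ^ 2 - 32 * c - 11 := by
    intro c h1 h2
    nlinarith [mul_pos (sub_pos.mpr h2) (show (0:ℝ) < 32 - 24 * (c + x) by linarith)]
  -- monotonicity
  have hanti : StrictAntiOn lorenz96L (Icc 0 m) := by
    apply strictAntiOn_of_deriv_neg (convex_Icc 0 m) hcont.continuousOn
    intro y hy
    rw [interior_Icc] at hy
    rw [(hderiv y).deriv]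
    have hypi : y < Real.pi := hy.2.trans hmpi
    have hsin : 0 < Real.sin y := Real.sin_pos_of_pos_of_lt_pi hy.1 hypi
    have hcy : x < Real.cos y := by
      rw [← hcm]
      exact Real.strictAntiOn_cos ⟨hy.1.le, hypi.le⟩ ⟨hm0.le, hmpi.le⟩ hy.2
    exact mul_neg_of_pos_of_neg hsin (hq_neg _ hcy (Real.cos_le_one y))
  have hmono : StrictMonoOn lorenz96L (Icc m Real.pi) := by
    apply strictMonoOn_of_deriv_pos (convex_Icc m Real.pi) hcont.continuousOn
    intro y hy
    rw [interior_Icc] at hy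
    have hy0 : 0 < y := hm0.trans hy.1
    have hsin : 0 < Real.sin y := Real.sin_pos_of_pos_of_lt_pi hy0 hy.2
    have hcy : Real.cos y < x := by
      rw [← hcm]
      exact Real.strictAntiOn_cos ⟨hm0.le, hmpi.le⟩ ⟨hy0.le, hy.2.le⟩ hy.1
    rw [(hderiv y).deriv]
    exact mul_pos hsin (hq_pos _ (Real.neg_one_le_cos y) hcy)
  have hLm : lorenz96L m < 0 := by
    have := hmono ⟨le_rfl, hmpi.le⟩ ⟨hmpi.le, le_rfl⟩ hmpi
    rw [hLpi] at this; linarith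
  -- existence of the zero
  obtain ⟨y₀, hy₀mem, hy₀⟩ : ∃ y₀ ∈ Ioo (0 : ℝ) m, lorenz96L y₀ = 0 := by
    have h := intermediate_value_Ioo' hm0.le hcont.continuousOn
      (show (0 : ℝ) ∈ Ioo (lorenz96L m) (lorenz96L 0) by rw [hL0]; exact ⟨hLm, by norm_num⟩)
    obtain ⟨y₀, h1, h2⟩ := h
    exact ⟨y₀, h1, h2⟩
  have hy₀pi : y₀ < Real.pi := hy₀mem.2.trans hmpi
  -- sign results
  have hpos : ∀ y ∈ Ioo (0 : ℝ) y₀, 0 < lorenz96L y := by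
    intro y hy
    have := hanti ⟨hy.1.le, (hy.2.trans hy₀mem.2).le⟩ ⟨hy₀mem.1.le, hy₀mem.2.le⟩ hy.2
    rw [hy₀] at this; exact this
  have hneg : ∀ y ∈ Ioo y₀ Real.pi, lorenz96L y < 0 := by
    intro y hy
    rcases le_or_gt y m with h | h
    · have := hanti ⟨hy₀mem.1.le, hy₀mem.2.le⟩ ⟨(hy₀mem.1.trans hy.1).le, h⟩ hy.1
      rw [hy₀] at this; exact this
    · have := hmono ⟨h.le, hy.2.le⟩ ⟨hmpi.le, le_rfl⟩ hy.2
      rw [hLpi] at this; linarith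
  refine ⟨hderiv, hL0, hLpi, y₀, ⟨hy₀mem.1, hy₀pi⟩, hy₀, ?_, hpos, hneg⟩
  intro y hy hzero
  rcases lt_trichotomy y y₀ with h | h | h
  · have := hpos y ⟨hy.1, h⟩; rw [hzero] at this; linarith
  · exact h
  · have := hneg y ⟨h, hy.2⟩; rw [hzero] at this; linarith
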